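/- Let f : {0,1}^n → {0,1} be a monotone Boolean function and let L be an invertible n×n matrix over F_2 all of whose diagonal entries are nonzero. Then for every i ∈ {1,…,n}, I_i(f) ≤ I_i(Lf). -/
import Mathlib


open Finset

/-- The influence of the `i`-th variable on a Boolean function
`f : {0,1}^n → {0,1}`: `I_i(f) = 2^{-n} Σ_x |f(x+e_i) − f(x)|`. -/
noncomputable def inflCoord (n : ℕ) (f : (Fin n → ZMod 2) → ZMod 2) (i : Fin n) : ℝ :=
  (1 / 2 ^ n) * ∑ x : Fin n → ZMod 2,
    |((f (x + Pi.single i 1)).val : ℝ) - ((f x).val : ℝ)|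

/-- The influence of a vector `y` on a Boolean function `f`:
`I_y(f) = 2^{-n} Σ_x |f(x+y) − f(x)|`. -/
noncomputable def inflVec (n : ℕ) (f : (Fin n → ZMod 2) → ZMod 2) (y : Fin n → ZMod 2) : ℝ :=
  (1 / 2 ^ n) * ∑ x : Fin n → ZMod 2,
    |((f (x + y)).val : ℝ) - ((f x).val : ℝ)|

/-- The total influence `I(f) = Σ_i I_i(f)`. -/
noncomputable def totalInfl (n : ℕ) (f : (Fin n → ZMod 2) → ZMod 2) : ℝ :=
  ∑ i : Fin n, inflCoord n f i

/-- A Boolean function is monotone if `x_i ≤ y_i` for all `i` implies `f(x) ≤ f(y)`. -/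
def IsMonotoneBF (n : ℕ) (f : (Fin n → ZMod 2) → ZMod 2) : Prop :=
  ∀ x y : Fin n → ZMod 2, (∀ i, (x i).val ≤ (y i).val) → (f x).val ≤ (f y).val

lemma zmod2_cases : ∀ a : ZMod 2, a = 0 ∨ a = 1 := by decide

lemma vec_add_self (v : Fin n → ZMod 2) : v + v = 0 := by
  funext j; exact CharTwo.add_self_eq_zero _

lemma mono_step (n : ℕ) (f : (Fin n → ZMod 2) → ZMod 2) (hf : IsMonotoneBF n f)
    (i : Fin n) (x : Fin n → ZMod 2) (h : x i = 0) :
    (f x).val ≤ (f (x + Pi.single i 1)).val := by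
  apply hf
  intro j
  by_cases hj : j = i
  · subst hj; simp [h]
  · simp [Pi.single_eq_of_ne hj]

lemma key (n : ℕ) (f : (Fin n → ZMod 2) → ZMod 2) (hf : IsMonotoneBF n f)
    (i : Fin n) (y : Fin n → ZMod 2) (hy : y i = 1) :
    inflVec n f (Pi.single i 1) ≤ inflVec n f y := by
  set e : Fin n → ZMod 2 := Pi.single i 1 with he
  set z : Fin n → ZMod 2 := y + e with hzdef
  have hze : z + e = y := by rw [hzdef, add_assoc, vec_add_self, add_zero]
  have hzi : z i = 0 := by simp [hzdef, he, hy]; decide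
  set A : (Fin n → ZMod 2) → ℝ := fun x => |((f (x + y)).val : ℝ) - ((f x).val : ℝ)| with hA
  set B : (Fin n → ZMod 2) → ℝ := fun x => |((f (x + e)).val : ℝ) - ((f x).val : ℝ)| with hB
  have reA : ∑ x : Fin n → ZMod 2, A (x + z) = ∑ x : Fin n → ZMod 2, A x :=
    Fintype.sum_equiv (Equiv.addRight z) _ _ (fun x => rfl)
  have reB : ∑ x : Fin n → ZMod 2, B (x + z) = ∑ x : Fin n → ZMod 2, B x :=
    Fintype.sum_equiv (Equiv.addRight z) _ _ (fun x => rfl)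
  have pointwise : ∀ x : Fin n → ZMod 2, B x + B (x + z) ≤ A x + A (x + z) := by
    intro x
    have hxy : x + y = x + z + e := by rw [add_assoc, hze]
    have hzy : z + y = e := by
      rw [hzdef, add_comm y e, add_assoc, vec_add_self, add_zero]
    have hxzy : x + z + y = x + e := by rw [add_assoc, hzy]
    have hA1 : A x = |((f (x + z + e)).val : ℝ) - ((f x).val : ℝ)| := by rw [hA]; simp only; rw [hxy]
    have hA2 : A (x + z) = |((f (x + e)).val : ℝ) - ((f (x + z)).val : ℝ)| := by
      rw [hA]; simp only; rw [hxzy]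
    have hxzi : (x + z) i = x i := by simp [hzi]
    rcases zmod2_cases (x i) with hx0 | hx1
    · have h1 : (f x).val ≤ (f (x + e)).val := mono_step n f hf i x hx0
      have h2 : (f (x + z)).val ≤ (f (x + z + e)).val :=
        mono_step n f hf i (x + z) (by rw [hxzi, hx0])
      have h1' : ((f x).val : ℝ) ≤ ((f (x + e)).val : ℝ) := by exact_mod_cast h1
      have h2' : ((f (x + z)).val : ℝ) ≤ ((f (x + z + e)).val : ℝ) := by exact_mod_cast h2
      have e1 : B x = ((f (x + e)).val : ℝ) - ((f x).val : ℝ) := abs_of_nonneg (by linarith)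
      have e2 : B (x + z) = ((f (x + z + e)).val : ℝ) - ((f (x + z)).val : ℝ) :=
        abs_of_nonneg (by linarith)
      have i1 : ((f (x + z + e)).val : ℝ) - ((f x).val : ℝ) ≤ A x := hA1 ▸ le_abs_self _
      have i2 : ((f (x + e)).val : ℝ) - ((f (x + z)).val : ℝ) ≤ A (x + z) := hA2 ▸ le_abs_self _
      rw [e1, e2]; linarith
    · have hxe : x + e + e = x := by rw [add_assoc, vec_add_self, add_zero]
      have hxzee : x + z + e + e = x + z := by rw [add_assoc, vec_add_self, add_zero]
      have h1 : (f (x + e)).val ≤ (f x).val := by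
        have := mono_step n f hf i (x + e) (by simp [he, hx1]; decide)
        rwa [hxe] at this
      have h2 : (f (x + z + e)).val ≤ (f (x + z)).val := by
        have := mono_step n f hf i (x + z + e) (by simp [he, hxzi, hx1]; decide)
        rwa [hxzee] at this
      have h1' : ((f (x + e)).val : ℝ) ≤ ((f x).val : ℝ) := by exact_mod_cast h1
      have h2' : ((f (x + z + e)).val : ℝ) ≤ ((f (x + z)).val : ℝ) := by exact_mod_cast h2
      have e1 : B x = ((f x).val : ℝ) - ((f (x + e)).val : ℝ) := by
        rw [hB]; simp only; rw [abs_sub_comm]; exact abs_of_nonneg (by linarith)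
      have e2 : B (x + z) = ((f (x + z)).val : ℝ) - ((f (x + z + e)).val : ℝ) := by
        rw [hB]; simp only; rw [abs_sub_comm]; exact abs_of_nonneg (by linarith)
      have i1 : ((f x).val : ℝ) - ((f (x + z + e)).val : ℝ) ≤ A x := by
        rw [hA1, abs_sub_comm]; exact le_abs_self _
      have i2 : ((f (x + z)).val : ℝ) - ((f (x + e)).val : ℝ) ≤ A (x + z) := by
        rw [hA2, abs_sub_comm]; exact le_abs_self _
      rw [e1, e2]; linarith
  have hsum : ∑ x : Fin n → ZMod 2, B x ≤ ∑ x : Fin n → ZMod 2, A x := by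
    have h2 : ∑ x : Fin n → ZMod 2, (B x + B (x + z)) ≤ ∑ x : Fin n → ZMod 2, (A x + A (x + z)) :=
      Finset.sum_le_sum (fun x _ => pointwise x)
    rw [Finset.sum_add_distrib, Finset.sum_add_distrib, reA, reB] at h2
    linarith
  unfold inflVec
  apply mul_le_mul_of_nonneg_left hsum (by positivity)

/-- If `f` is monotone and `L` is invertible over `F_2` with all diagonal entries
nonzero, then `I_i(f) ≤ I_i(Lf)` for every `i`. -/
theorem inflCoord_le_of_monotone_diag (n : ℕ)
    (f : (Fin n → ZMod 2) → ZMod 2) (hf : IsMonotoneBF n f)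
    (L : Matrix (Fin n) (Fin n) (ZMod 2)) (hL : IsUnit L)
    (hdiag : ∀ i : Fin n, L i i ≠ 0) :
    ∀ i : Fin n, inflCoord n f i ≤ inflCoord n (fun x => f (L.mulVec x)) i := by
  intro i
  obtain ⟨u, rfl⟩ := hL
  set L : Matrix (Fin n) (Fin n) (ZMod 2) := (u : Matrix (Fin n) (Fin n) (ZMod 2)) with hLdef
  set y : Fin n → ZMod 2 := L.mulVec (Pi.single i 1) with hy
  have hyi : y i = 1 := by
    have : y i = L i i := by rw [hy, Matrix.mulVec_single]; simp
    rw [this]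
    rcases zmod2_cases (L i i) with h | h
    · exact absurd h (hdiag i)
    · exact h
  have hbij : Function.Bijective (fun x => L.mulVec x) := by
    refine Function.bijective_iff_has_inverse.mpr
      ⟨fun x => ((u⁻¹ : _) : Matrix (Fin n) (Fin n) (ZMod 2)).mulVec x, fun x => ?_, fun x => ?_⟩
    · show ((u⁻¹ : _) : Matrix (Fin n) (Fin n) (ZMod 2)).mulVec (L.mulVec x) = x
      rw [Matrix.mulVec_mulVec, hLdef, u.inv_mul, Matrix.one_mulVec]
    · show L.mulVec (((u⁻¹ : _) : Matrix (Fin n) (Fin n) (ZMod 2)).mulVec x) = x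
      rw [Matrix.mulVec_mulVec, hLdef, u.mul_inv, Matrix.one_mulVec]
  have hre : inflCoord n (fun x => f (L.mulVec x)) i = inflVec n f y := by
    unfold inflCoord inflVec
    congr 1
    refine Fintype.sum_bijective _ hbij _ _ (fun x => ?_)
    show |((f (L.mulVec (x + Pi.single i 1))).val : ℝ) - ((f (L.mulVec x)).val : ℝ)|
      = |((f (L.mulVec x + y)).val : ℝ) - ((f (L.mulVec x)).val : ℝ)|
    rw [Matrix.mulVec_add, ← hy]
  rw [hre]
  exact key n f hf i y hyi
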